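/- arXiv:1705.00317 — 3 statements merged into one kernel-verified Lean document; each statement's English description precedes it below -/
import Mathlib

section
/- Let a, b, r be real numbers with r > 0, and let b' be such that a ≥ r·b' + b, where b' ≥ 1, r·b' + b ≥ 1, and b' ≥ t for some t ≥ 1 with t + b/r ≥ 1. If b < 0 then ln a ≥ ln r + ln b' - (t + b/r)⁻¹ · (-b/r), and if b ≥ 0 then ln a ≥ ln r + ln b'. -/
theorem log_mutual_no_smaller_than (a b' r b t : ℝ)
    (hr : 0 < r) (hb' : 1 ≤ b') (ha : a ≥ r * b' + b) (hrb : r * b' + b ≥ 1)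
    (hbt : b' ≥ t) (ht : 1 ≤ t) (htb : t + b / r ≥ 1) :
    (b < 0 → Real.log a ≥ Real.log r + Real.log b' - (t + b / r)⁻¹ * (-(b / r))) ∧
    (b ≥ 0 → Real.log a ≥ Real.log r + Real.log b') := by
  have ha1 : (1:ℝ) ≤ a := le_trans hrb ha
  have hla : Real.log (r * b' + b) ≤ Real.log a :=
    Real.log_le_log (by linarith) ha
  constructor
  · intro hb
    set c := b / r with hc
    have hcneg : c < 0 := div_neg_of_neg_of_pos hb hr
    have htc : (0:ℝ) < t + c := by linarith
    have hs : t + c ≤ b' + c := by linarith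
    have hspos : (0:ℝ) < b' + c := lt_of_lt_of_le htc hs
    have hb'pos : (0:ℝ) < b' := by linarith
    have hkey : r * b' + b = r * (b' + c) := by
      field_simp [hc]; rw [hc]; field_simp
    -- log b' - log (b'+c) ≤ (-c)/(b'+c) ≤ (-c)/(t+c)
    have h1 : Real.log b' - Real.log (b' + c) ≤ (-c) / (b' + c) := by
      have := Real.log_le_sub_one_of_pos (x := b' / (b' + c)) (by positivity)
      rw [Real.log_div (ne_of_gt hb'pos) (ne_of_gt hspos)] at this
      have : Real.log b' - Real.log (b' + c) ≤ b' / (b' + c) - 1 := this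
      have heq : b' / (b' + c) - 1 = (-c) / (b' + c) := by
        field_simp
        ring
      linarith [heq ▸ this]
    have h2 : (-c) / (b' + c) ≤ (-c) / (t + c) :=
      div_le_div_of_nonneg_left (by linarith) htc hs
    have h3 : Real.log (r * (b' + c)) = Real.log r + Real.log (b' + c) :=
      Real.log_mul (ne_of_gt hr) (ne_of_gt hspos)
    have : Real.log a ≥ Real.log r + Real.log (b' + c) := by
      rw [← h3, ← hkey]; exact hla
    have h4 : (t + c)⁻¹ * (-c) = (-c) / (t + c) := by ring
    rw [h4]
    linarith
  · intro hb
    have hb'pos : (0:ℝ) < b' := by linarith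
    have h3 : Real.log (r * b') = Real.log r + Real.log b' :=
      Real.log_mul (ne_of_gt hr) (ne_of_gt hb'pos)
    have : Real.log (r * b') ≤ Real.log a :=
      Real.log_le_log (by positivity) (by linarith)
    linarith
end

section
/- Let r > 1 be real, and a, b', s, b, t reals with s > 0, b ≥ 0, b' ≥ t ≥ 1, and 1 ≤ a ≤ s·b' + b. Let M := b/(s·t) + 1. Then a^r ≤ s^r · (b'^r + M^(r-1) · r · (b/s) · b'^(r-1)). -/
theorem exp_mutual_no_greater_than (r a b' s b t : ℝ)
    (hr : 1 < r) (hs : 0 < s) (hb : 0 ≤ b) (hbt : b' ≥ t) (ht : 1 ≤ t)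
    (ha1 : 1 ≤ a) (ha : a ≤ s * b' + b) :
    a ^ r ≤ s ^ r * (b' ^ r + (b / (s * t) + 1) ^ (r - 1) * r * (b / s) * b' ^ (r - 1)) := by
  have hb' : (1:ℝ) ≤ b' := le_trans ht hbt
  have hb'0 : (0:ℝ) < b' := lt_of_lt_of_le one_pos hb'
  set c : ℝ := b / s with hc
  have hc0 : 0 ≤ c := div_nonneg hb hs.le
  set y : ℝ := b' + c with hy
  have hy0 : 0 < y := by positivity
  set M : ℝ := b / (s * t) + 1 with hM
  have hM0 : 0 ≤ M := by positivity
  -- Bernoulli: (b'/y)^r ≥ 1 + r*(b'/y - 1)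
  have hu : -1 ≤ b' / y - 1 := by
    have : 0 ≤ b' / y := by positivity
    linarith
  have hbern := one_add_mul_self_le_rpow_one_add hu hr.le
  rw [add_sub_cancel] at hbern
  -- (b'/y)^r = b'^r / y^r
  have hdiv : (b' / y) ^ r = b' ^ r / y ^ r := Real.div_rpow hb'0.le hy0.le r
  rw [hdiv] at hbern
  have hyr : 0 < y ^ r := Real.rpow_pos_of_pos hy0 r
  -- multiply by y^r : y^r * (1 + r*(b'/y - 1)) ≤ b'^r
  have hmul : y ^ r * (1 + r * (b' / y - 1)) ≤ b' ^ r := by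
    have := (le_div_iff₀ hyr).mp hbern
    nlinarith [this]
  have hys : y ^ r / y = y ^ (r - 1) := by
    rw [Real.rpow_sub_one hy0.ne']
  -- y^r ≤ b'^r + r*c*y^(r-1)
  have key : y ^ r ≤ b' ^ r + r * c * y ^ (r - 1) := by
    have hexp : y ^ r * (1 + r * (b' / y - 1)) = y ^ r - r * c * (y ^ r / y) := by
      field_simp
      ring
    rw [hexp, hys] at hmul
    linarith
  -- y ≤ M * b'
  have hyM : y ≤ M * b' := by
    have h1 : b / s ≤ b / (s * t) * b' := by
      rw [div_mul_eq_mul_div, div_le_div_iff₀ hs (by positivity)]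
      have : s * t ≤ s * b' := by nlinarith
      nlinarith
    simp only [hy, hM]
    nlinarith
  have hyr1 : y ^ (r - 1) ≤ (M * b') ^ (r - 1) :=
    Real.rpow_le_rpow hy0.le hyM (by linarith)
  have hMb : (M * b') ^ (r - 1) = M ^ (r - 1) * b' ^ (r - 1) :=
    Real.mul_rpow hM0 hb'0.le
  have key2 : y ^ r ≤ b' ^ r + M ^ (r - 1) * r * c * b' ^ (r - 1) := by
    have hrc : 0 ≤ r * c := by positivity
    have := mul_le_mul_of_nonneg_left hyr1 hrc
    rw [hMb] at this
    calc y ^ r ≤ b' ^ r + r * c * y ^ (r - 1) := key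
      _ ≤ b' ^ r + M ^ (r - 1) * r * c * b' ^ (r - 1) := by nlinarith
  -- a ≤ s * y
  have hasy : a ≤ s * y := by
    simp only [hy, hc]
    rw [mul_add, mul_div_cancel₀ _ hs.ne']
    exact ha
  have ha0 : (0:ℝ) ≤ a := le_trans zero_le_one ha1
  have h1 : a ^ r ≤ (s * y) ^ r := Real.rpow_le_rpow ha0 hasy (by linarith)
  have h2 : (s * y) ^ r = s ^ r * y ^ r := Real.mul_rpow hs.le hy0.le
  calc a ^ r ≤ s ^ r * y ^ r := h2 ▸ h1
    _ ≤ s ^ r * (b' ^ r + M ^ (r - 1) * r * c * b' ^ (r - 1)) := by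
        apply mul_le_mul_of_nonneg_left key2 (Real.rpow_nonneg hs.le r)
end

section
/- (Farkas' Lemma, affine form) Let A be an m×n real matrix, b ∈ ℝ^m, c ∈ ℝ^n and d ∈ ℝ. Assume the polyhedron {x : A x ≤ b} is nonempty. Then {x : A x ≤ b} ⊆ {x : cᵀ x ≤ d} if and only if there exists y ∈ ℝ^m with y ≥ 0, Aᵀ y = c, and bᵀ y ≤ d. -/
/-!
Since the polyhedron `{x | A x ≤ b}` is nonempty, the implication `A x ≤ b → cᵀ x ≤ d` homogenizes
to `A x ≤ t b → 0 ≤ t → cᵀ x ≤ t d`: for `t > 0` rescale `x`, and for `t = 0` the vector `x` is a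
recession direction of the polyhedron, along which `cᵀ` cannot increase. The homogeneous Farkas
lemma then produces the certificate `y`. It holds because a finitely generated cone is closed
(by the conic Carathéodory reduction to linearly independent generators), so a point outside it
is separated from it by a linear functional (Hahn–Banach).
-/

open Set Matrix

namespace PointedCone

variable {E : Type*} [AddCommGroup E] [Module ℝ E]

theorem mem_hull_range_iff {ι : Type*} [Fintype ι] {v : ι → E} {x : E} :
    x ∈ hull ℝ (range v) ↔ ∃ y : ι → ℝ, 0 ≤ y ∧ ∑ i, y i • v i = x := by
  rw [Submodule.mem_span_range_iff_exists_fun]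
  constructor
  · rintro ⟨c, rfl⟩
    exact ⟨fun i => c i, fun i => (c i).2, rfl⟩
  · rintro ⟨y, hy, rfl⟩
    exact ⟨fun i => ⟨y i, hy i⟩, rfl⟩

theorem exists_nonneg_coeff_eq_zero {ι : Type*} [Fintype ι] {v : ι → E} {μ : ι → ℝ}
    (hμ : ∑ i, μ i • v i = 0) (hpos : ∃ j, 0 < μ j) {y : ι → ℝ} (hy : 0 ≤ y) :
    ∃ y' : ι → ℝ, 0 ≤ y' ∧ (∃ i, y' i = 0) ∧ ∑ i, y' i • v i = ∑ i, y i • v i := by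
  classical
  obtain ⟨i₀, hi₀, hmin⟩ := Finset.exists_min_image {i | 0 < μ i} (fun i => y i / μ i)
    (by simpa [Finset.Nonempty] using hpos)
  rw [Finset.mem_filter_univ] at hi₀
  -- `t` is the largest step along `-μ` that keeps `y` nonnegative.
  set t := y i₀ / μ i₀
  refine ⟨y - t • μ, fun i => ?_, ⟨i₀, ?_⟩, ?_⟩
  · simp only [Pi.zero_apply, Pi.sub_apply, Pi.smul_apply, smul_eq_mul, sub_nonneg]
    rcases lt_or_ge 0 (μ i) with hμi | hμi
    · exact (le_div_iff₀ hμi).1 (hmin i ((Finset.mem_filter_univ _).2 hμi))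
    · exact (mul_nonpos_of_nonneg_of_nonpos (div_nonneg (hy i₀) hi₀.le) hμi).trans (hy i)
  · simp [t, div_mul_cancel₀ _ hi₀.ne']
  · simp only [Pi.sub_apply, Pi.smul_apply, smul_eq_mul, sub_smul, Finset.sum_sub_distrib,
      mul_smul, ← Finset.smul_sum, hμ, smul_zero, sub_zero]

theorem hull_range_eq_iUnion_of_not_linearIndependent {m : ℕ} {v : Fin (m + 1) → E}
    (hv : ¬LinearIndependent ℝ v) :
    (hull ℝ (range v) : Set E) = ⋃ i : Fin (m + 1), (hull ℝ (range (v ∘ i.succAbove)) : Set E) := by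
  refine subset_antisymm (fun x hx => ?_)
    (iUnion_subset fun i => Submodule.span_mono (range_comp_subset_range _ v))
  obtain ⟨μ, hμ, hpos⟩ : ∃ μ : Fin (m + 1) → ℝ, ∑ i, μ i • v i = 0 ∧ ∃ j, 0 < μ j := by
    obtain ⟨g, hg, j, hj⟩ := Fintype.not_linearIndependent_iff.1 hv
    rcases hj.lt_or_gt with hj | hj
    · exact ⟨-g, by simp [neg_smul, hg], j, by simpa using hj⟩
    · exact ⟨g, hg, j, hj⟩
  obtain ⟨y, hy, rfl⟩ := mem_hull_range_iff.1 hx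
  obtain ⟨y', hy', ⟨i, hi⟩, hsum⟩ := exists_nonneg_coeff_eq_zero hμ hpos hy
  refine mem_iUnion.2 ⟨i, mem_hull_range_iff.2 ⟨y' ∘ i.succAbove, fun j => hy' _, ?_⟩⟩
  rw [← hsum, Fin.sum_univ_succAbove _ i, hi, zero_smul, zero_add]
  rfl

variable [TopologicalSpace E] [IsTopologicalAddGroup E] [ContinuousSMul ℝ E] [T2Space E]

theorem isClosed_hull_range_of_linearIndependent {ι : Type*} [Fintype ι] {v : ι → E}
    (hv : LinearIndependent ℝ v) : IsClosed (hull ℝ (range v) : Set E) := by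
  have himage : (hull ℝ (range v) : Set E) = Fintype.linearCombination ℝ v '' Ici 0 := by
    ext x
    simp [mem_hull_range_iff, Fintype.linearCombination_apply]
  rw [himage]
  exact (LinearMap.isClosedEmbedding_of_injective (LinearMap.ker_eq_bot.2
    (linearIndependent_iff_injective_fintypeLinearCombination.1 hv))).isClosedMap _ isClosed_Ici

theorem isClosed_hull_range_fin (m : ℕ) :
    ∀ v : Fin m → E, IsClosed (hull ℝ (range v) : Set E) := by
  induction m with
  | zero => exact fun v => isClosed_hull_range_of_linearIndependent linearIndependent_empty_type
  | succ m ih =>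
    intro v
    by_cases hv : LinearIndependent ℝ v
    · exact isClosed_hull_range_of_linearIndependent hv
    · rw [hull_range_eq_iUnion_of_not_linearIndependent hv]
      exact isClosed_iUnion_of_finite fun i => ih _

theorem isClosed_hull_range {ι : Type*} [Finite ι] (v : ι → E) :
    IsClosed (hull ℝ (range v) : Set E) := by
  obtain ⟨m, ⟨e⟩⟩ := Finite.exists_equiv_fin ι
  rw [← e.symm.surjective.range_comp v]
  exact isClosed_hull_range_fin m _

theorem mem_hull_range_of_forall_nonneg [LocallyConvexSpace ℝ E] {ι : Type*} [Finite ι]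
    {v : ι → E} {c : E} (h : ∀ f : StrongDual ℝ E, (∀ i, 0 ≤ f (v i)) → 0 ≤ f c) :
    c ∈ hull ℝ (range v) := by
  by_contra hc
  obtain ⟨f, hf, hfc⟩ :=
    ProperCone.hyperplane_separation_point ⟨hull ℝ (range v), isClosed_hull_range v⟩ hc
  exact hfc.not_ge (h f fun i => hf _ (subset_hull (mem_range_self i)))

end PointedCone

theorem LinearMap.apply_eq_dotProduct {R κ : Type*} [CommSemiring R] [Fintype κ] [DecidableEq κ]
    (f : (κ → R) →ₗ[R] R) (z : κ → R) : f z = z ⬝ᵥ fun j => f (Pi.single j 1) := by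
  conv_lhs => rw [← Finset.univ_sum_single z]
  simp only [map_sum, dotProduct]
  refine Finset.sum_congr rfl fun j _ => ?_
  rw [← smul_eq_mul, ← map_smul, ← Pi.single_smul', smul_eq_mul, mul_one]

namespace Matrix

variable {ι κ : Type*}

/-- The matrix of `(x, t) ↦ (A x - t b, -t)`, which is nonpositive exactly on the cone over the
polyhedron `{x | A x ≤ b}`. -/
def homogenization (A : Matrix ι κ ℝ) (b : ι → ℝ) : Matrix (ι ⊕ Unit) (κ ⊕ Unit) ℝ :=
  fromBlocks A (-replicateCol Unit b) 0 (-1)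

theorem vecMul_homogenization [Fintype ι] (A : Matrix ι κ ℝ) (b : ι → ℝ) (y : ι ⊕ Unit → ℝ) :
    y ᵥ* homogenization A b =
      Sum.elim (y ∘ Sum.inl ᵥ* A) fun _ => -(b ⬝ᵥ y ∘ Sum.inl) - y (Sum.inr ()) := by
  ext (j | _) <;> simp [homogenization, vecMul, dotProduct, mul_comm, sub_eq_add_neg]

variable [Fintype κ]

theorem exists_nonneg_vecMul_eq_of_mulVec_nonpos [Fintype ι] (M : Matrix ι κ ℝ) (c : κ → ℝ)
    (h : ∀ x, M *ᵥ x ≤ 0 → c ⬝ᵥ x ≤ 0) : ∃ y, 0 ≤ y ∧ y ᵥ* M = c := by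
  classical
  suffices hc : c ∈ PointedCone.hull ℝ (range M) by
    obtain ⟨y, hy, hsum⟩ := PointedCone.mem_hull_range_iff.1 hc
    exact ⟨y, hy, by rw [vecMul_eq_sum, hsum]⟩
  refine PointedCone.mem_hull_range_of_forall_nonneg fun f hf => ?_
  set w : κ → ℝ := fun j => f (Pi.single j 1)
  have hfw : ∀ z, f z = z ⬝ᵥ w := (f : (κ → ℝ) →ₗ[ℝ] ℝ).apply_eq_dotProduct
  have hMw : M *ᵥ -w ≤ 0 := fun i => by
    simpa [mulVec_neg, mulVec, hfw] using hf i
  simpa [hfw] using h (-w) hMw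

theorem dotProduct_le_of_vecMul_eq [Fintype ι] {A : Matrix ι κ ℝ} {b : ι → ℝ} {c : κ → ℝ}
    {y : ι → ℝ} {x : κ → ℝ} (hy : 0 ≤ y) (hyA : y ᵥ* A = c) (hx : A *ᵥ x ≤ b) :
    c ⬝ᵥ x ≤ b ⬝ᵥ y := calc
  c ⬝ᵥ x = y ⬝ᵥ A *ᵥ x := by rw [dotProduct_mulVec, hyA]
  _ ≤ y ⬝ᵥ b := dotProduct_le_dotProduct_of_nonneg_left hx hy
  _ = b ⬝ᵥ y := dotProduct_comm _ _

variable {A : Matrix ι κ ℝ} {b : ι → ℝ} {c : κ → ℝ} {d : ℝ} {x : κ → ℝ}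

theorem dotProduct_nonpos_of_mulVec_nonpos (hsub : ∀ x, A *ᵥ x ≤ b → c ⬝ᵥ x ≤ d) {x₀ : κ → ℝ}
    (hx₀ : A *ᵥ x₀ ≤ b) (hx : A *ᵥ x ≤ 0) : c ⬝ᵥ x ≤ 0 := by
  by_contra! hcx
  -- the step along `x` after which `c ⬝ᵥ (x₀ + s • x) = d + 1`
  set s := (d - c ⬝ᵥ x₀ + 1) / c ⬝ᵥ x
  have hs : 0 ≤ s := div_nonneg (by linarith [hsub x₀ hx₀]) hcx.le
  have hfeas : A *ᵥ (x₀ + s • x) ≤ b := by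
    rw [mulVec_add, mulVec_smul]
    exact add_le_of_le_of_nonpos hx₀ (smul_nonpos_of_nonneg_of_nonpos hs hx)
  have hd := hsub _ hfeas
  rw [dotProduct_add, dotProduct_smul, smul_eq_mul, div_mul_cancel₀ _ hcx.ne'] at hd
  linarith

theorem dotProduct_le_mul_of_mulVec_le_smul (hsub : ∀ x, A *ᵥ x ≤ b → c ⬝ᵥ x ≤ d)
    (hne : ∃ x₀, A *ᵥ x₀ ≤ b) {t : ℝ} (ht : 0 ≤ t) (hx : A *ᵥ x ≤ t • b) : c ⬝ᵥ x ≤ t * d := by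
  rcases ht.eq_or_lt with rfl | ht
  · obtain ⟨x₀, hx₀⟩ := hne
    simpa using dotProduct_nonpos_of_mulVec_nonpos hsub hx₀ (by simpa using hx)
  · have hd := hsub (t⁻¹ • x) (by
      rw [mulVec_smul, ← inv_smul_smul₀ ht.ne' b]
      exact smul_le_smul_of_nonneg_left hx (inv_nonneg.2 ht.le))
    rwa [dotProduct_smul, smul_eq_mul, inv_mul_le_iff₀ ht] at hd

theorem homogenization_mulVec_nonpos_iff {t : ℝ} :
    homogenization A b *ᵥ Sum.elim x (fun _ => t) ≤ 0 ↔ A *ᵥ x ≤ t • b ∧ 0 ≤ t := by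
  simp [homogenization, fromBlocks_mulVec, neg_mulVec, Pi.le_def, mulVec, dotProduct, mul_comm]

theorem dotProduct_nonpos_of_homogenization_mulVec_nonpos
    (hsub : ∀ x, A *ᵥ x ≤ b → c ⬝ᵥ x ≤ d) (hne : ∃ x₀, A *ᵥ x₀ ≤ b) (z : κ ⊕ Unit → ℝ)
    (hz : homogenization A b *ᵥ z ≤ 0) : Sum.elim c (fun _ => -d) ⬝ᵥ z ≤ 0 := by
  obtain ⟨x, t, rfl⟩ : ∃ x t, z = Sum.elim x fun _ => t :=
    ⟨z ∘ Sum.inl, z (Sum.inr ()), by ext (j | _) <;> rfl⟩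
  rw [homogenization_mulVec_nonpos_iff] at hz
  simpa [sumElim_dotProduct_sumElim, mul_comm] using
    dotProduct_le_mul_of_mulVec_le_smul hsub hne hz.2 hz.1

end Matrix

open Matrix in
theorem farkas_lemma_affine (m n : ℕ) (A : Matrix (Fin m) (Fin n) ℝ)
    (b : Fin m → ℝ) (c : Fin n → ℝ) (d : ℝ)
    (hne : ∃ x : Fin n → ℝ, ∀ i, A.mulVec x i ≤ b i) :
    ({x : Fin n → ℝ | ∀ i, A.mulVec x i ≤ b i} ⊆
      {x : Fin n → ℝ | ∑ j, c j * x j ≤ d}) ↔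
    ∃ y : Fin m → ℝ, (∀ i, 0 ≤ y i) ∧ A.transpose.mulVec y = c ∧ ∑ i, b i * y i ≤ d := by
  simp only [mulVec_transpose]
  refine ⟨fun hsub => ?_,
    fun ⟨y, hy, hyA, hby⟩ x hx => (dotProduct_le_of_vecMul_eq hy hyA hx).trans hby⟩
  obtain ⟨y, hy, hyM⟩ := (homogenization A b).exists_nonneg_vecMul_eq_of_mulVec_nonpos _
    (dotProduct_nonpos_of_homogenization_mulVec_nonpos (fun x hx => hsub hx) hne)
  rw [vecMul_homogenization, Sum.elim_eq_iff] at hyM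
  refine ⟨y ∘ Sum.inl, fun i => hy _, hyM.1, ?_⟩
  have hlast := congrFun hyM.2 ()
  change b ⬝ᵥ y ∘ Sum.inl ≤ d
  linarith [show 0 ≤ y (Sum.inr ()) from hy _]
end
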